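/- Let (P, y) be a KZ doctrine on a 2-category 𝒞 and let L : A ⟶ B be a P-admissible 1-cell with left extension (R_L, φ_L) of y_A along L. Then the exhibiting 2-cell φ_L is invertible if and only if PL := lan_L is fully faithful (equivalently, if and only if the unit of the adjunction PL ⊣ res_L is invertible). -/

import Mathlib

open CategoryTheory Bicategory

universe w v u

variable {𝒞 : Type u} [Bicategory.{w, v} 𝒞]

/-- A 2-cell `η : I ⟶ L ≫ R` exhibits `R` as a left extension of `I` along `L` when
pasting with `η` gives a bijection between 2-cells `R ⟶ M` and 2-cells `I ⟶ L ≫ M`. -/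
def ExhibitsLeftExt {a b c : 𝒞} (L : a ⟶ b) (I : a ⟶ c) (R : b ⟶ c)
    (η : I ⟶ L ≫ R) : Prop :=
  ∀ M : b ⟶ c, Function.Bijective (fun σ : R ⟶ M => η ≫ L ◁ σ)

/-- The left extension `(R, η)` of `I` along `L` is respected by `E` when the whiskering of
`η` by `E` exhibits `R ≫ E` as a left extension of `I ≫ E` along `L`. -/
def RespectsLeftExt {a b c d : 𝒞} (L : a ⟶ b) (I : a ⟶ c) (R : b ⟶ c)
    (η : I ⟶ L ≫ R) (E : c ⟶ d) : Prop :=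
  ExhibitsLeftExt L (I ≫ E) (R ≫ E) ((η ▷ E) ≫ (α_ L R E).hom)

/-- A 2-cell `η : I ⟶ L ≫ R` exhibits `L` as a left lifting of `I` through `R` when pasting
with `η` gives a bijection between 2-cells `L ⟶ K` and 2-cells `I ⟶ K ≫ R`. -/
def ExhibitsLeftLift {a b c : 𝒞} (R : b ⟶ c) (I : a ⟶ c) (L : a ⟶ b)
    (η : I ⟶ L ≫ R) : Prop :=
  ∀ K : a ⟶ b, Function.Bijective (fun δ : L ⟶ K => η ≫ δ ▷ R)

/-- The left lifting is absolute when it is preserved by whiskering with any 1-cell `F`. -/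
def ExhibitsAbsLeftLift {a b c : 𝒞} (R : b ⟶ c) (I : a ⟶ c) (L : a ⟶ b)
    (η : I ⟶ L ≫ R) : Prop :=
  ∀ {x : 𝒞} (F : x ⟶ a),
    ExhibitsLeftLift R (F ≫ I) (F ≫ L) ((F ◁ η) ≫ (α_ F L R).inv)

/-- A 1-cell is (representably) fully faithful when whiskering by it is bijective on 2-cells. -/
def FullyFaithful1Cell {a b : 𝒞} (F : a ⟶ b) : Prop :=
  ∀ {x : 𝒞} (u v : x ⟶ a), Function.Bijective (fun σ : u ⟶ v => σ ▷ F)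

/-- A KZ doctrine on a 2-category (Marmolejo–Wood style, in terms of left extensions). -/
structure KZDoctrine (𝒞 : Type u) [Bicategory.{w, v} 𝒞] where
  /-- action on objects -/
  P : 𝒞 → 𝒞
  /-- the units -/
  y : ∀ A : 𝒞, A ⟶ P A
  /-- chosen left extensions along the units -/
  ext : ∀ {A C : 𝒞}, (A ⟶ P C) → (P A ⟶ P C)
  /-- the invertible 2-cells exhibiting the chosen left extensions -/
  c : ∀ {A C : 𝒞} (F : A ⟶ P C), F ≅ y A ≫ ext F
  ext_isLeftExt : ∀ {A C : 𝒞} (F : A ⟶ P C),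
    ExhibitsLeftExt (y A) F (ext F) (c F).hom
  /-- (a) the identity 2-cell exhibits `𝟙 (P A)` as a left extension of `y A` along `y A` -/
  y_selfExt : ∀ A : 𝒞, ExhibitsLeftExt (y A) (y A) (𝟙 (P A)) (ρ_ (y A)).inv
  /-- (b) the chosen left extensions respect each other -/
  ext_respects : ∀ {A B C : 𝒞} (F : A ⟶ P B) (G : B ⟶ P C),
    RespectsLeftExt (y A) F (ext F) (c F).hom (ext G)

/-- `lan L` (also denoted `PL`), the chosen left extension of `y B ∘ L` along `y A`. -/
abbrev KZDoctrine.lan (D : KZDoctrine 𝒞) {A B : 𝒞} (L : A ⟶ B) : D.P A ⟶ D.P B :=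
  D.ext (L ≫ D.y B)

/-- An object `X` is `P`-cocomplete when every `G : A ⟶ X` admits a left extension along
`y A` exhibited by an invertible 2-cell, and these left extensions respect the chosen left
extensions of the KZ doctrine. -/
def PCocomplete (D : KZDoctrine 𝒞) (X : 𝒞) : Prop :=
  ∀ {A : 𝒞} (G : A ⟶ X), ∃ (Gb : D.P A ⟶ X) (cG : G ≅ D.y A ≫ Gb),
    ExhibitsLeftExt (D.y A) G Gb cG.hom ∧
    ∀ {A' : 𝒞} (F : A' ⟶ D.P A),
      RespectsLeftExt (D.y A') F (D.ext F) (D.c F).hom Gb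

/-- A 1-cell is a `P`-homomorphism when it respects all left extensions along units. -/
def PHomomorphism (D : KZDoctrine 𝒞) {X Y : 𝒞} (E : X ⟶ Y) : Prop :=
  ∀ {A : 𝒞} (G : A ⟶ X) (Gb : D.P A ⟶ X) (η : G ⟶ D.y A ≫ Gb),
    ExhibitsLeftExt (D.y A) G Gb η → RespectsLeftExt (D.y A) G Gb η E

/-- The data `(R, φ)` witnesses `P`-admissibility of `L`: `φ` exhibits `R` as a left
extension of `y A` along `L`, and this left extension is respected by every left extension
`Hb : P A ⟶ X` along `y A` into every `P`-cocomplete object `X`. -/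
def AdmissibleData (D : KZDoctrine 𝒞) {A B : 𝒞} (L : A ⟶ B) (R : B ⟶ D.P A)
    (φ : D.y A ⟶ L ≫ R) : Prop :=
  ExhibitsLeftExt L (D.y A) R φ ∧
  ∀ {X : 𝒞}, PCocomplete D X →
    ∀ (H : A ⟶ X) (Hb : D.P A ⟶ X) (cH : H ≅ D.y A ≫ Hb),
      ExhibitsLeftExt (D.y A) H Hb cH.hom → RespectsLeftExt L (D.y A) R φ Hb

/-- A 1-cell `L` is `P`-admissible when some `(R, φ)` witnesses its admissibility. -/
def PAdmissible (D : KZDoctrine 𝒞) {A B : 𝒞} (L : A ⟶ B) : Prop :=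
  ∃ (R : B ⟶ D.P A) (φ : D.y A ⟶ L ≫ R), AdmissibleData D L R φ

/-!
The chosen extensions `lan L` and `ext RL` are left extensions along units, and admissibility
(applied to the cocomplete object `P B`) makes `φL ▷ lan L` a left extension along `L` as well.
Their universal properties produce a unit `𝟙 ⟶ lan L ≫ ext RL`, transposing `φL`, and a counit
`ext RL ≫ lan L ⟶ 𝟙`; uniqueness of factorizations gives the triangle identities, so
`lan L ⊣ ext RL`. Restricted along `y A`, the unit is `φL` followed by an invertible 2-cell, and
a comparison of left extensions along `y A` is invertible once its restriction is; hence `φL` is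
invertible iff the unit is. Finally, for any adjunction `f ⊣ g` the transpose of `σ ▷ f` is `σ`
followed by `q ◁ unit`, so by Yoneda `f` is fully faithful iff the unit is invertible.
-/

namespace ExhibitsLeftExt

variable {a b c : 𝒞} {L : a ⟶ b} {I : a ⟶ c} {R : b ⟶ c} {η : I ⟶ L ≫ R}

noncomputable def desc (h : ExhibitsLeftExt L I R η) {M : b ⟶ c} (β : I ⟶ L ≫ M) : R ⟶ M :=
  ((h M).2 β).choose

theorem fac (h : ExhibitsLeftExt L I R η) {M : b ⟶ c} (β : I ⟶ L ≫ M) :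
    η ≫ L ◁ h.desc β = β :=
  ((h M).2 β).choose_spec

theorem hom_ext (h : ExhibitsLeftExt L I R η) {M : b ⟶ c} {σ σ' : R ⟶ M}
    (e : η ≫ L ◁ σ = η ≫ L ◁ σ') : σ = σ' :=
  (h M).1 e

theorem isIso_of_comp_eq (h : ExhibitsLeftExt L I R η) {I' : a ⟶ c} {R' : b ⟶ c}
    {η' : I' ⟶ L ≫ R'} (h' : ExhibitsLeftExt L I' R' η') {t : I ⟶ I'} [IsIso t]
    {σ : R ⟶ R'} (hσ : η ≫ L ◁ σ = t ≫ η') : IsIso σ := by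
  refine ⟨h'.desc (inv t ≫ η), h.hom_ext ?_, h'.hom_ext ?_⟩
  · rw [whiskerLeft_comp, reassoc_of% hσ, h'.fac, IsIso.hom_inv_id_assoc, whiskerLeft_id,
      Category.comp_id]
  · rw [whiskerLeft_comp, ← Category.assoc, h'.fac, Category.assoc, hσ, IsIso.inv_hom_id_assoc,
      whiskerLeft_id, Category.comp_id]

end ExhibitsLeftExt

namespace CategoryTheory.Bicategory.Adjunction

variable {a b : 𝒞} {f : a ⟶ b} {g : b ⟶ a} (adj : f ⊣ g)

lemma homEquiv₂_whiskerRight {x : 𝒞} {p q : x ⟶ a} (σ : p ⟶ q) :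
    adj.homEquiv₂ (σ ▷ f) = σ ≫ (ρ_ q).inv ≫ q ◁ adj.unit ≫ (α_ q f g).inv := by
  rw [homEquiv₂_apply, ← associator_inv_naturality_left, whisker_exchange_assoc,
    ← rightUnitor_inv_naturality_assoc]

theorem fullyFaithful1Cell_iff_isIso_unit : FullyFaithful1Cell f ↔ IsIso adj.unit := by
  have whiskered : ∀ {x : 𝒞} (q : x ⟶ a),
      IsIso ((ρ_ q).inv ≫ q ◁ adj.unit ≫ (α_ q f g).inv) ↔ IsIso (q ◁ adj.unit) := by
    intro x q
    rw [isIso_comp_left_iff, isIso_comp_right_iff]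
  calc FullyFaithful1Cell f
      ↔ ∀ {x : 𝒞} (q : x ⟶ a), IsIso (q ◁ adj.unit) := by
        simp only [FullyFaithful1Cell, ← whiskered, isIso_iff_yoneda_map_bijective,
          ← adj.homEquiv₂.comp_bijective, Function.comp_def, homEquiv₂_whiskerRight]
        exact ⟨fun h x q p => h p q, fun h x p q => h q p⟩
    _ ↔ IsIso adj.unit := by
        refine ⟨fun h => ?_, fun _ _ _ => inferInstance⟩
        have := h (𝟙 a)
        rwa [id_whiskerLeft, isIso_comp_left_iff, isIso_comp_right_iff] at this

end CategoryTheory.Bicategory.Adjunction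

namespace KZDoctrine

variable (D : KZDoctrine 𝒞) {A B : 𝒞} {L : A ⟶ B} {RL : B ⟶ D.P A}

theorem pCocomplete_P (B : 𝒞) : PCocomplete D (D.P B) :=
  fun G => ⟨D.ext G, D.c G, D.ext_isLeftExt G, fun F => D.ext_respects F G⟩

def compExtIso (L : A ⟶ B) (RL : B ⟶ D.P A) : L ≫ RL ≅ D.y A ≫ D.lan L ≫ D.ext RL :=
  whiskerLeftIso L (D.c RL) ≪≫ (α_ _ _ _).symm ≪≫ whiskerRightIso (D.c (L ≫ D.y B)) _ ≪≫
    α_ _ _ _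

theorem compExtIso_hom (L : A ⟶ B) (RL : B ⟶ D.P A) :
    (D.compExtIso L RL).hom = L ◁ (D.c RL).hom ≫ (α_ _ _ _).inv ≫
      (D.c (L ≫ D.y B)).hom ▷ D.ext RL ≫ (α_ _ _ _).hom := by
  simp [compExtIso]

noncomputable def lanUnit (φL : D.y A ⟶ L ≫ RL) : 𝟙 (D.P A) ⟶ D.lan L ≫ D.ext RL :=
  (D.y_selfExt A).desc (φL ≫ (D.compExtIso L RL).hom)

theorem lanUnit_fac (φL : D.y A ⟶ L ≫ RL) :
    (ρ_ (D.y A)).inv ≫ D.y A ◁ D.lanUnit φL = φL ≫ (D.compExtIso L RL).hom :=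
  (D.y_selfExt A).fac _

theorem isIso_iff_isIso_lanUnit (φL : D.y A ⟶ L ≫ RL) : IsIso φL ↔ IsIso (D.lanUnit φL) := by
  refine ⟨fun _ => ?_, fun _ => ?_⟩
  · refine (D.y_selfExt A).isIso_of_comp_eq (D.ext_respects (L ≫ D.y B) RL)
      (t := φL ≫ L ◁ (D.c RL).hom ≫ (α_ _ _ _).inv) ?_
    simp [lanUnit_fac, compExtIso_hom]
  · rw [← isIso_comp_right_iff φL (D.compExtIso L RL).hom, ← lanUnit_fac]
    infer_instance

end KZDoctrine

namespace AdmissibleData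

variable {D : KZDoctrine 𝒞} {A B : 𝒞} {L : A ⟶ B} {RL : B ⟶ D.P A} {φL : D.y A ⟶ L ≫ RL}

theorem exhibitsLeftExt_comp_lan (hL : AdmissibleData D L RL φL) :
    ExhibitsLeftExt L (D.y A ≫ D.lan L) (RL ≫ D.lan L)
      (φL ▷ D.lan L ≫ (α_ L RL (D.lan L)).hom) :=
  hL.2 (D.pCocomplete_P B) _ _ (D.c _) (D.ext_isLeftExt _)

noncomputable def counitAlongUnit (hL : AdmissibleData D L RL φL) : RL ≫ D.lan L ⟶ D.y B :=
  hL.exhibitsLeftExt_comp_lan.desc (D.c (L ≫ D.y B)).inv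

theorem counitAlongUnit_fac (hL : AdmissibleData D L RL φL) :
    (φL ▷ D.lan L ≫ (α_ L RL (D.lan L)).hom) ≫ L ◁ hL.counitAlongUnit = (D.c (L ≫ D.y B)).inv :=
  hL.exhibitsLeftExt_comp_lan.fac _

noncomputable def lanCounit (hL : AdmissibleData D L RL φL) : D.ext RL ≫ D.lan L ⟶ 𝟙 (D.P B) :=
  ExhibitsLeftExt.desc (D.ext_respects RL (L ≫ D.y B)) (hL.counitAlongUnit ≫ (ρ_ _).inv)

theorem lanCounit_fac (hL : AdmissibleData D L RL φL) :
    ((D.c RL).hom ▷ D.lan L ≫ (α_ _ _ _).hom) ≫ D.y B ◁ hL.lanCounit =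
      hL.counitAlongUnit ≫ (ρ_ _).inv :=
  ExhibitsLeftExt.fac (D.ext_respects RL (L ≫ D.y B)) _

theorem left_triangle (hL : AdmissibleData D L RL φL) :
    leftZigzag (D.lanUnit φL) hL.lanCounit = (λ_ _).hom ≫ (ρ_ _).inv := by
  have hu := D.lanUnit_fac φL
  rw [KZDoctrine.compExtIso_hom] at hu
  suffices (λ_ _).inv ≫ leftZigzag (D.lanUnit φL) hL.lanCounit ≫ (ρ_ _).hom = 𝟙 _ by
    rw [← cancel_epi (λ_ _).inv, ← cancel_mono (ρ_ _).hom, Category.assoc, this]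
    simp
  refine (D.ext_isLeftExt (L ≫ D.y B)).hom_ext ?_
  calc (D.c (L ≫ D.y B)).hom ≫ D.y A ◁
        ((λ_ _).inv ≫ leftZigzag (D.lanUnit φL) hL.lanCounit ≫ (ρ_ _).hom)
      = (D.c (L ≫ D.y B)).hom ⊗≫ ((ρ_ (D.y A)).inv ≫ D.y A ◁ D.lanUnit φL) ▷ D.lan L ⊗≫
          D.y A ◁ D.lan L ◁ hL.lanCounit ⊗≫ 𝟙 _ := by
        bicategory
    _ = (D.c (L ≫ D.y B)).hom ⊗≫ φL ▷ D.lan L ⊗≫ (L ◁ (D.c RL).hom) ▷ D.lan L ⊗≫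
          ((D.c (L ≫ D.y B)).hom ▷ (D.ext RL ≫ D.lan L) ≫
            (D.y A ≫ D.lan L) ◁ hL.lanCounit) ⊗≫ 𝟙 _ := by
        rw [hu]; bicategory
    _ = (D.c (L ≫ D.y B)).hom ⊗≫ φL ▷ D.lan L ⊗≫
          L ◁ (((D.c RL).hom ▷ D.lan L ≫ (α_ _ _ _).hom) ≫ D.y B ◁ hL.lanCounit) ⊗≫
          (D.c (L ≫ D.y B)).hom := by
        rw [← whisker_exchange]; bicategory
    _ = (D.c (L ≫ D.y B)).hom ≫ (((φL ▷ D.lan L ≫ (α_ L RL (D.lan L)).hom) ≫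
          L ◁ hL.counitAlongUnit) ≫ (D.c (L ≫ D.y B)).hom) := by
        rw [hL.lanCounit_fac]; bicategory
    _ = (D.c (L ≫ D.y B)).hom ≫ D.y A ◁ 𝟙 _ := by
        rw [hL.counitAlongUnit_fac]; simp

theorem whiskerLeft_lanUnit_comp_counitAlongUnit (hL : AdmissibleData D L RL φL) :
    (𝟙 RL ⊗≫ RL ◁ D.lanUnit φL ⊗≫ hL.counitAlongUnit ▷ D.ext RL :
      RL ⟶ D.y B ≫ D.ext RL) = (D.c RL).hom := by
  have hu := D.lanUnit_fac φL
  rw [KZDoctrine.compExtIso_hom] at hu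
  refine hL.1.hom_ext ?_
  calc φL ≫ L ◁ (𝟙 RL ⊗≫ RL ◁ D.lanUnit φL ⊗≫ hL.counitAlongUnit ▷ D.ext RL)
      = 𝟙 _ ⊗≫ (φL ▷ 𝟙 _ ≫ (L ≫ RL) ◁ D.lanUnit φL) ⊗≫
          L ◁ hL.counitAlongUnit ▷ D.ext RL ⊗≫ 𝟙 _ := by
        bicategory
    _ = 𝟙 _ ⊗≫ ((ρ_ (D.y A)).inv ≫ D.y A ◁ D.lanUnit φL) ⊗≫ φL ▷ (D.lan L ≫ D.ext RL) ⊗≫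
          L ◁ hL.counitAlongUnit ▷ D.ext RL ⊗≫ 𝟙 _ := by
        rw [← whisker_exchange]; bicategory
    _ = φL ≫ L ◁ (D.c RL).hom ⊗≫ ((D.c (L ≫ D.y B)).hom ≫
          ((φL ▷ D.lan L ≫ (α_ L RL (D.lan L)).hom) ≫ L ◁ hL.counitAlongUnit)) ▷ D.ext RL ⊗≫
          𝟙 _ := by
        rw [hu]; bicategory
    _ = φL ≫ L ◁ (D.c RL).hom := by
        rw [hL.counitAlongUnit_fac, Iso.hom_inv_id]; bicategory

theorem right_triangle (hL : AdmissibleData D L RL φL) :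
    rightZigzag (D.lanUnit φL) hL.lanCounit = (ρ_ _).hom ≫ (λ_ _).inv := by
  suffices (ρ_ _).inv ≫ rightZigzag (D.lanUnit φL) hL.lanCounit ≫ (λ_ _).hom = 𝟙 _ by
    rw [← cancel_epi (ρ_ _).inv, ← cancel_mono (λ_ _).hom, Category.assoc, this]
    simp
  refine (D.ext_isLeftExt RL).hom_ext ?_
  calc (D.c RL).hom ≫ D.y B ◁
        ((ρ_ _).inv ≫ rightZigzag (D.lanUnit φL) hL.lanCounit ≫ (λ_ _).hom)
      = 𝟙 _ ⊗≫ (RL ◁ D.lanUnit φL ≫ (D.c RL).hom ▷ (D.lan L ≫ D.ext RL)) ⊗≫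
          D.y B ◁ hL.lanCounit ▷ D.ext RL ⊗≫ 𝟙 _ := by
        rw [whisker_exchange]; bicategory
    _ = 𝟙 _ ⊗≫ RL ◁ D.lanUnit φL ⊗≫
          (((D.c RL).hom ▷ D.lan L ≫ (α_ _ _ _).hom) ≫ D.y B ◁ hL.lanCounit) ▷ D.ext RL ⊗≫
          𝟙 _ := by
        bicategory
    _ = 𝟙 RL ⊗≫ RL ◁ D.lanUnit φL ⊗≫ hL.counitAlongUnit ▷ D.ext RL := by
        rw [hL.lanCounit_fac]; bicategory
    _ = (D.c RL).hom ≫ D.y B ◁ 𝟙 _ := by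
        rw [hL.whiskerLeft_lanUnit_comp_counitAlongUnit]; simp

noncomputable def adjunction (hL : AdmissibleData D L RL φL) : D.lan L ⊣ D.ext RL where
  unit := D.lanUnit φL
  counit := hL.lanCounit
  left_triangle := hL.left_triangle
  right_triangle := hL.right_triangle

end AdmissibleData

/-- For `P`-admissible `L` with left extension `(R_L, φ_L)`, the 2-cell
`φ_L` is invertible iff `PL := lan L` is fully faithful. -/
theorem stmt12 (D : KZDoctrine 𝒞) {A B : 𝒞} (L : A ⟶ B)
    (RL : B ⟶ D.P A) (φL : D.y A ⟶ L ≫ RL) (hL : AdmissibleData D L RL φL) :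
    IsIso φL ↔ FullyFaithful1Cell (D.lan L) :=
  (D.isIso_iff_isIso_lanUnit φL).trans hL.adjunction.fullyFaithful1Cell_iff_isIso_unit.symm
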